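/- arXiv:1506.00432 — 3 statements merged into one kernel-verified Lean document; each statement's English description precedes it below -/
import Mathlib

section
/- Let P ⊆ ℤⁿ be a lattice and ω = (-1+√-3)/2. Regarding 𝒫 = P + ωP as a lattice in ℝ^{2n} via the identification of ℂⁿ with ℝ^{2n}, the minimum Euclidean distance of P + ωP equals the minimum Euclidean distance of P. -/
/-- ω = (-1+√-3)/2 -/
noncomputable def ω : ℂ := (-1 + Real.sqrt 3 * Complex.I) / 2

/-- Embedding of a pair (p, q) ∈ ℤⁿ × ℤⁿ as the vector p + ωq ∈ ℂⁿ,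
which is identified with (p - q/2, (√3/2)q) ∈ ℝ^{2n} (the Euclidean/Hermitian
norms agree under this identification). -/
noncomputable def toC (n : ℕ) (p q : Fin n → ℤ) : EuclideanSpace ℂ (Fin n) :=
  WithLp.toLp 2 (fun i => (p i : ℂ) + ω * (q i : ℂ))

/-- Embedding of ℤⁿ in Euclidean space ℝⁿ. -/
noncomputable def toR (n : ℕ) (p : Fin n → ℤ) : EuclideanSpace ℝ (Fin n) :=
  WithLp.toLp 2 (fun i => (p i : ℝ))

/-!
Write a difference of two points of `P + ωP` as `a + ωb` with `a, b ∈ P`. Since `|ω| = 1` and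
`ω + ω̄ = -1`, one has `‖a + ωb‖² = (‖a‖² + ‖b‖² + ‖a - b‖²) / 2`. If `b = 0` (or `a = 0`) this
is `‖a‖²` (resp. `‖b‖²`), so `P` sits isometrically in `P + ωP`; otherwise it is at least
`(‖a‖² + ‖b‖²) / 2 ≥ min (‖a‖, ‖b‖)²`. Either way every distance in `P + ωP` is bounded below by
a distance in `P`, and both minima agree.
-/

lemma normSq_add_ω_mul (x y : ℝ) :
    Complex.normSq (x + ω * y) = (x ^ 2 + y ^ 2 + (x - y) ^ 2) / 2 := by
  have h3 : Real.sqrt 3 ^ 2 = 3 := Real.sq_sqrt (by norm_num)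
  simp only [Complex.normSq_apply, ω, Complex.add_re, Complex.add_im, Complex.mul_re,
    Complex.mul_im, Complex.div_re, Complex.div_im, Complex.ofReal_re, Complex.ofReal_im,
    Complex.I_re, Complex.I_im]
  norm_num
  linear_combination (y ^ 2 / 4) * h3

section

variable {n : ℕ}

lemma norm_toR_sq (a : Fin n → ℤ) : ‖toR n a‖ ^ 2 = ∑ i, (a i : ℝ) ^ 2 := by
  simp [EuclideanSpace.norm_sq_eq, toR]

lemma norm_toC_sq (a b : Fin n → ℤ) :
    ‖toC n a b‖ ^ 2 = (‖toR n a‖ ^ 2 + ‖toR n b‖ ^ 2 + ‖toR n (a - b)‖ ^ 2) / 2 := by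
  rw [EuclideanSpace.norm_sq_eq, norm_toR_sq, norm_toR_sq, norm_toR_sq, ← Finset.sum_add_distrib,
    ← Finset.sum_add_distrib, Finset.sum_div]
  refine Finset.sum_congr rfl fun i _ => ?_
  simp only [toC, Complex.sq_norm, Pi.sub_apply, Int.cast_sub]
  exact_mod_cast normSq_add_ω_mul (a i) (b i)

lemma toC_sub (p q p' q' : Fin n → ℤ) : toC n (p - p') (q - q') = toC n p q - toC n p' q' := by
  ext i
  simp only [toC, Pi.sub_apply, Int.cast_sub, PiLp.sub_apply]
  ring

lemma toR_sub (x y : Fin n → ℤ) : toR n (x - y) = toR n x - toR n y := by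
  ext i
  simp [toR]

lemma toR_zero : toR n 0 = 0 := by
  ext i
  simp [toR]

lemma toR_injective : Function.Injective (toR n) := fun x y h => by
  funext i
  simpa [toR] using congrArg (fun v : EuclideanSpace ℝ (Fin n) => v i) h

lemma norm_toC_zero_right (a : Fin n → ℤ) : ‖toC n a 0‖ = ‖toR n a‖ := by
  rw [← sq_eq_sq₀ (norm_nonneg _) (norm_nonneg _), norm_toC_sq, sub_zero, toR_zero, norm_zero]
  ring

lemma norm_toC_zero_left (b : Fin n → ℤ) : ‖toC n 0 b‖ = ‖toR n b‖ := by
  rw [← sq_eq_sq₀ (norm_nonneg _) (norm_nonneg _), norm_toC_sq, toR_sub, toR_zero, zero_sub,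
    norm_neg, norm_zero]
  ring

lemma dist_toC_zero_right (x y : Fin n → ℤ) :
    dist (toC n x 0) (toC n y 0) = dist (toR n x) (toR n y) := by
  rw [dist_eq_norm, dist_eq_norm, ← toR_sub, ← norm_toC_zero_right, ← toC_sub, sub_zero]

lemma exists_norm_toR_le_norm_toC {a b : Fin n → ℤ} (h : a ≠ 0 ∨ b ≠ 0) :
    ∃ c, (c = a ∨ c = b) ∧ c ≠ 0 ∧ ‖toR n c‖ ≤ ‖toC n a b‖ := by
  by_cases ha : a = 0
  · subst ha
    exact ⟨b, .inr rfl, h.resolve_left (absurd rfl), (norm_toC_zero_left b).ge⟩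
  by_cases hb : b = 0
  · subst hb
    exact ⟨a, .inl rfl, ha, (norm_toC_zero_right a).ge⟩
  have hsq : (‖toR n a‖ ^ 2 + ‖toR n b‖ ^ 2) / 2 ≤ ‖toC n a b‖ ^ 2 := by
    rw [norm_toC_sq]
    linarith [sq_nonneg ‖toR n (a - b)‖]
  rcases le_total ‖toR n a‖ ‖toR n b‖ with hab | hba
  · refine ⟨a, .inl rfl, ha, (sq_le_sq₀ (norm_nonneg _) (norm_nonneg _)).1 ?_⟩
    nlinarith [norm_nonneg (toR n a)]
  · refine ⟨b, .inr rfl, hb, (sq_le_sq₀ (norm_nonneg _) (norm_nonneg _)).1 ?_⟩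
    nlinarith [norm_nonneg (toR n b)]

end

/-- for a lattice P ⊆ ℤⁿ, the minimum Euclidean distance of
𝒫 = P + ωP (regarded as a lattice in ℝ^{2n}) equals that of P. -/
theorem stmt_1 (n : ℕ) (P : AddSubgroup (Fin n → ℤ)) :
    sInf {d : ℝ | ∃ p ∈ P, ∃ q ∈ P, ∃ p' ∈ P, ∃ q' ∈ P,
        toC n p q ≠ toC n p' q' ∧ d = dist (toC n p q) (toC n p' q')} =
      sInf {d : ℝ | ∃ x ∈ P, ∃ y ∈ P, x ≠ y ∧ d = dist (toR n x) (toR n y)} := by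
  apply csInf_eq_csInf_of_forall_exists_le
  · rintro _ ⟨p, hp, q, hq, p', hp', q', hq', hne, rfl⟩
    have hab : p - p' ≠ 0 ∨ q - q' ≠ 0 := by
      contrapose! hne
      rw [sub_eq_zero.1 hne.1, sub_eq_zero.1 hne.2]
    obtain ⟨c, hc, hc0, hle⟩ := exists_norm_toR_le_norm_toC hab
    have hcP : c ∈ P := by
      rcases hc with rfl | rfl
      exacts [P.sub_mem hp hp', P.sub_mem hq hq']
    refine ⟨_, ⟨c, hcP, 0, P.zero_mem, hc0, rfl⟩, ?_⟩
    rwa [dist_eq_norm, dist_eq_norm, ← toR_sub, sub_zero, ← toC_sub]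
  · rintro _ ⟨x, hx, y, hy, hxy, rfl⟩
    refine ⟨_, ⟨x, hx, 0, P.zero_mem, y, hy, 0, P.zero_mem, ?_, rfl⟩, ?_⟩
    · rw [← dist_pos, dist_toC_zero_right, dist_pos]
      exact toR_injective.ne hxy
    · rw [dist_toC_zero_right]
end

section
/- Let L ⊆ A_{n-1} = {x ∈ ℤⁿ : Σxᵢ = 0} be a lattice of rank n-1, and let χ be a nonzero integer. Let B be the lattice generated by L together with the vector e = (0,...,0,χ). Then the minimum Euclidean distance of B satisfies d_E(B) ≥ min{d_E(L), χ/√n}. -/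
/-!
A nonzero difference of two points of `B = L + ℤ e` has the form `a + k e` with `a ∈ L`, `k ∈ ℤ`.
If `k = 0` it is a nonzero vector of `L`, of length at least `d_E(L)`. Otherwise its coordinate
sum is `k χ`, since the coordinates of `a` sum to `0`, so by Cauchy–Schwarz against the all-ones
vector its length is at least `|k χ| / √n ≥ |χ| / √n`.
-/

theorem abs_sum_le_sqrt_card_mul_norm {ι : Type*} [Fintype ι] (z : EuclideanSpace ℝ ι) :
    |∑ i, z i| ≤ √(Fintype.card ι) * ‖z‖ := by
  rw [EuclideanSpace.norm_eq, ← Real.sqrt_mul (Nat.cast_nonneg _), ← Real.sqrt_sq_eq_abs]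
  gcongr
  simpa only [Real.norm_eq_abs, sq_abs, Finset.card_univ] using
    sq_sum_le_card_mul_sum_sq (s := Finset.univ) (f := fun i => z i)

theorem sInf_dist_le_dist {α : Type*} [PseudoMetricSpace α] {S : Set α} {a b : α}
    (ha : a ∈ S) (hb : b ∈ S) (hab : a ≠ b) :
    sInf {d : ℝ | ∃ a ∈ S, ∃ b ∈ S, a ≠ b ∧ d = dist a b} ≤ dist a b :=
  csInf_le ⟨0, by rintro _ ⟨_, -, _, -, -, rfl⟩; exact dist_nonneg⟩ ⟨a, ha, b, hb, hab, rfl⟩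

theorem min_sInf_dist_le_dist_of_mem_sup_span {ι : Type*} [Fintype ι]
    (L : Submodule ℤ (EuclideanSpace ℝ ι)) (hL : ∀ x ∈ L, ∑ i, x i = 0)
    (e : EuclideanSpace ℝ ι) {x y : EuclideanSpace ℝ ι}
    (hx : x ∈ L ⊔ Submodule.span ℤ {e}) (hy : y ∈ L ⊔ Submodule.span ℤ {e}) (hxy : x ≠ y) :
    min (sInf {d : ℝ | ∃ a ∈ L, ∃ b ∈ L, a ≠ b ∧ d = dist a b})
      (|∑ i, e i| / √(Fintype.card ι)) ≤ dist x y := by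
  obtain ⟨a, ha, _, hke, hdiff⟩ := Submodule.mem_sup.mp (sub_mem hx hy)
  obtain ⟨k, rfl⟩ := Submodule.mem_span_singleton.mp hke
  rw [dist_eq_norm, ← hdiff]
  rcases eq_or_ne k 0 with rfl | hk
  · refine (min_le_left _ _).trans ?_
    rw [zero_smul, add_zero] at hdiff ⊢
    have ha0 : a ≠ 0 := by rwa [hdiff, sub_ne_zero]
    simpa using sInf_dist_le_dist (S := L) ha L.zero_mem ha0
  · refine (min_le_right _ _).trans (div_le_of_le_mul₀ (Real.sqrt_nonneg _) (norm_nonneg _) ?_)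
    have hsum : ∑ i, (a + k • e) i = k * ∑ i, e i := by
      simp [Finset.sum_add_distrib, hL a ha, Finset.mul_sum]
    calc |∑ i, e i| ≤ |(k : ℝ)| * |∑ i, e i| :=
          le_mul_of_one_le_left (abs_nonneg _) (by exact_mod_cast Int.one_le_abs hk)
      _ = |∑ i, (a + k • e) i| := by rw [hsum, abs_mul]
      _ ≤ √(Fintype.card ι) * ‖a + k • e‖ := abs_sum_le_sqrt_card_mul_norm _
      _ = ‖a + k • e‖ * √(Fintype.card ι) := mul_comm _ _

theorem stmt_10_general (n : ℕ) (hn : 0 < n) (L : Submodule ℤ (EuclideanSpace ℝ (Fin n)))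
    (hLsum : ∀ x ∈ L, ∑ i, x i = 0)
    (χ : ℤ) :
    ∀ x ∈ L ⊔ Submodule.span ℤ
        ({(WithLp.toLp 2 (fun i : Fin n => if (i : ℕ) = n - 1 then (χ : ℝ) else 0) : EuclideanSpace ℝ (Fin n))} :
          Set (EuclideanSpace ℝ (Fin n))),
      ∀ y ∈ L ⊔ Submodule.span ℤ
        ({(WithLp.toLp 2 (fun i : Fin n => if (i : ℕ) = n - 1 then (χ : ℝ) else 0) : EuclideanSpace ℝ (Fin n))} :
          Set (EuclideanSpace ℝ (Fin n))),
      x ≠ y →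
      min (sInf {d : ℝ | ∃ a ∈ L, ∃ b ∈ L, a ≠ b ∧ d = dist a b})
          ((|χ| : ℝ) / Real.sqrt n) ≤ dist x y := by
  intro x hx y hy hxy
  have he_sum : ∑ i : Fin n, (if (i : ℕ) = n - 1 then (χ : ℝ) else 0) = χ := by
    rw [Finset.sum_eq_single_of_mem (⟨n - 1, Nat.sub_one_lt_of_lt hn⟩ : Fin n) (Finset.mem_univ _)
      fun i _ hi => if_neg fun h => hi (Fin.ext h), if_pos rfl]
  simpa [he_sum] using min_sInf_dist_le_dist_of_mem_sup_span L hLsum _ hx hy hxy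

/-- let L ⊆ A_{n-1} = {x ∈ ℤⁿ : Σxᵢ = 0} be a lattice of rank n-1 and χ a
nonzero integer.  If B is the lattice generated by L together with e = (0,…,0,χ), then
the minimum Euclidean distance of B satisfies d_E(B) ≥ min{d_E(L), |χ|/√n}, i.e. every
pair of distinct points of B is at distance at least min{d_E(L), |χ|/√n}. -/
theorem stmt_10 (n : ℕ) (hn : 0 < n) (L : Submodule ℤ (EuclideanSpace ℝ (Fin n)))
    (hLint : ∀ x ∈ L, ∀ i, ∃ m : ℤ, x i = m)
    (hLsum : ∀ x ∈ L, ∑ i, x i = 0)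
    (hrank : Module.finrank ℤ L = n - 1)
    (χ : ℤ) (hχ : χ ≠ 0) :
    ∀ x ∈ L ⊔ Submodule.span ℤ
        ({(WithLp.toLp 2 (fun i : Fin n => if (i : ℕ) = n - 1 then (χ : ℝ) else 0) : EuclideanSpace ℝ (Fin n))} :
          Set (EuclideanSpace ℝ (Fin n))),
      ∀ y ∈ L ⊔ Submodule.span ℤ
        ({(WithLp.toLp 2 (fun i : Fin n => if (i : ℕ) = n - 1 then (χ : ℝ) else 0) : EuclideanSpace ℝ (Fin n))} :
          Set (EuclideanSpace ℝ (Fin n))),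
      x ≠ y →
      min (sInf {d : ℝ | ∃ a ∈ L, ∃ b ∈ L, a ≠ b ∧ d = dist a b})
          ((|χ| : ℝ) / Real.sqrt n) ≤ dist x y :=
  stmt_10_general n hn L hLsum χ
end

section
/- Let C be a q-ary code of length n containing the zero codeword, with minimum Hamming distance d_H(C), whose alphabet consists of elements β₁ = 0, β₂, ..., β_q ∈ 𝒪_K representing the distinct residues modulo a prime ideal 𝔓 = (t) of 𝒪_K = ℤ[ω]. Let 𝒫 ⊆ 𝒪_Kⁿ be a packing with minimum squared Euclidean distance d_E²(𝒫) satisfying d_H(C) ≥ Q · d_E²(𝒫), where Q = N(𝔓). Then the set C + t·𝒫 = {c + tp : c ∈ C, p ∈ 𝒫} has minimum squared Euclidean distance at least Q · d_E²(𝒫), when 𝒪_Kⁿ is regarded as a subset of ℝ^{2n}. -/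
/-!
Two distinct words `c + t p` and `c' + t p'` are compared in two cases. If `c = c'`, their
difference is `t (p - p')`, so their squared distance is `|t|² d_E²(p, p') ≥ Q d_E²(𝒫)`, because
`Q = |𝒪_K/(t)| = N(t) = |t|²`: the index of the lattice `t 𝒪_K` is the determinant of
multiplication by `t`. If `c ≠ c'`, then wherever `c` and `c'` differ their residues mod `t`
differ, so the two words differ there too; as a nonzero Eisenstein integer has `|x|² ≥ 1`, the
squared distance is at least `d_H(C) ≥ Q d_E²(𝒫)`.
-/

attribute [local instance] Classical.propDecidable

/-- The ring of Eisenstein integers 𝒪_K = ℤ[ω] ⊆ ℂ. -/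
noncomputable def EisensteinInts : Subalgebra ℤ ℂ := Algebra.adjoin ℤ ({ω} : Set ℂ)

theorem Ideal.natCard_quotient_span_singleton {S : Type*} [CommRing S] [IsDomain S]
    [Module.Free ℤ S] [Module.Finite ℤ S] {r : S} (hr : r ≠ 0) :
    Nat.card (S ⧸ Ideal.span {r}) = (Algebra.norm ℤ r).natAbs := by
  let b := Module.Free.chooseBasis ℤ S
  refine (Submodule.natAbs_det_equiv ((Ideal.span {r}).restrictScalars ℤ)
    (b.equiv (Ideal.basisSpanSingleton b hr) (Equiv.refl _))).symm.trans ?_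
  rw [Algebra.norm_apply]
  congr
  refine b.ext fun i => ?_
  change ((b.equiv _ (Equiv.refl _) (b i) : Ideal.span {r}) : S) = r * b i
  rw [Module.Basis.equiv_apply, Equiv.refl_apply, Ideal.basisSpanSingleton_apply]

theorem hammingDist_le_hammingDist_add_mul {R ι : Type*} [CommRing R] [DecidableEq R]
    [Fintype ι] {t : R} {c c' : ι → R} (hc : ∀ i, c i ≠ c' i → ¬ t ∣ c i - c' i)
    (p p' : ι → R) :
    hammingDist c c' ≤ hammingDist (fun i => c i + t * p i) (fun i => c' i + t * p' i) := by
  refine Finset.card_le_card (Finset.monotone_filter_right _ fun i _ hi heq => ?_)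
  exact hc i hi ⟨p' i - p i, by linear_combination heq⟩

lemma omega_sq : ω ^ 2 = -1 - ω := by
  have h3 : ((Real.sqrt 3 : ℝ) : ℂ) ^ 2 = 3 := by
    rw [← Complex.ofReal_pow, Real.sq_sqrt (by norm_num)]; norm_num
  unfold ω
  linear_combination (Complex.I ^ 2 / 4) * h3 + (3 / 4 : ℂ) * Complex.I_sq

lemma omega_im : ω.im = Real.sqrt 3 / 2 := by
  simp [ω]

lemma omega_mem : ω ∈ EisensteinInts := Algebra.subset_adjoin rfl

namespace EisensteinInts

lemma exists_eq_add_mul_omega {z : ℂ} (hz : z ∈ EisensteinInts) :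
    ∃ a b : ℤ, z = a + b * ω := by
  induction hz using Algebra.adjoin_induction with
  | mem y hy =>
    rw [Set.mem_singleton_iff] at hy
    exact ⟨0, 1, by rw [hy]; push_cast; ring⟩
  | algebraMap r => exact ⟨r, 0, by rw [eq_intCast]; push_cast; ring⟩
  | add y z _ _ hy hz =>
    obtain ⟨a, b, rfl⟩ := hy; obtain ⟨c, d, rfl⟩ := hz
    exact ⟨a + c, b + d, by push_cast; ring⟩
  | mul y z _ _ hy hz =>
    obtain ⟨a, b, rfl⟩ := hy; obtain ⟨c, d, rfl⟩ := hz
    refine ⟨a * c - b * d, a * d + b * c - b * d, ?_⟩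
    push_cast
    linear_combination (b * d : ℂ) * omega_sq

lemma norm_sq_add_mul_omega (a b : ℤ) :
    ‖(a + b * ω : ℂ)‖ ^ 2 = ((a ^ 2 - a * b + b ^ 2 : ℤ) : ℝ) := by
  have h : (a + b * ω : ℂ) = ⟨a - b / 2, b * Real.sqrt 3 / 2⟩ := by
    apply Complex.ext <;> simp [ω] <;> ring
  rw [Complex.sq_norm, h, Complex.normSq_mk]
  have h3 : Real.sqrt 3 ^ 2 = 3 := Real.sq_sqrt (by norm_num)
  push_cast
  linear_combination (b ^ 2 / 4 : ℝ) * h3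

lemma one_le_norm_sq {x : EisensteinInts} (hx : x ≠ 0) : 1 ≤ ‖(x : ℂ)‖ ^ 2 := by
  obtain ⟨a, b, hab⟩ := exists_eq_add_mul_omega x.2
  have hab0 : a ≠ 0 ∨ b ≠ 0 := by
    by_contra! h
    exact hx (Subtype.ext (by simp [hab, h.1, h.2]))
  -- `4 (a² - ab + b²) = (2a - b)² + 3b²`
  have hpos : 0 < a ^ 2 - a * b + b ^ 2 := by
    rcases hab0 with ha | hb
    · nlinarith [sq_nonneg (a - 2 * b), sq_pos_of_ne_zero ha]
    · nlinarith [sq_nonneg (2 * a - b), sq_pos_of_ne_zero hb]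
  rw [hab, norm_sq_add_mul_omega]
  exact_mod_cast hpos

noncomputable def omega : EisensteinInts := ⟨ω, omega_mem⟩

lemma linearIndependent_one_omega : LinearIndependent ℤ ![(1 : EisensteinInts), omega] := by
  rw [LinearIndependent.pair_iff]
  intro s u hsu
  have h : (s + u * ω : ℂ) = 0 := by
    simpa [omega] using congrArg (fun x : EisensteinInts => (x : ℂ)) hsu
  have hu : u = 0 := by simpa [omega_im] using congrArg Complex.im h
  subst hu
  exact ⟨by simpa using h, rfl⟩

lemma span_one_omega : ⊤ ≤ Submodule.span ℤ (Set.range ![(1 : EisensteinInts), omega]) := by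
  rintro x -
  obtain ⟨a, b, hab⟩ := exists_eq_add_mul_omega x.2
  have hx : x = a • (1 : EisensteinInts) + b • omega := Subtype.ext (by simpa [omega] using hab)
  rw [hx]
  exact Submodule.add_mem _ (Submodule.smul_mem _ _ (Submodule.subset_span ⟨0, rfl⟩))
    (Submodule.smul_mem _ _ (Submodule.subset_span ⟨1, rfl⟩))

noncomputable def basis : Module.Basis (Fin 2) ℤ EisensteinInts :=
  .mk linearIndependent_one_omega span_one_omega

lemma basis_zero : basis 0 = 1 := by simp [basis]

lemma basis_one : basis 1 = omega := by simp [basis]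

instance : Module.Free ℤ EisensteinInts := .of_basis basis

instance : Module.Finite ℤ EisensteinInts := .of_basis basis

lemma norm_eq_norm_sq (t : EisensteinInts) : (Algebra.norm ℤ t : ℝ) = ‖(t : ℂ)‖ ^ 2 := by
  obtain ⟨a, b, hab⟩ := exists_eq_add_mul_omega t.2
  -- the matrix of multiplication by `a + bω` in the basis `1, ω`, since `ω² = -1 - ω`
  have hmul : Algebra.lmul ℤ EisensteinInts t = Matrix.toLin basis basis !![a, -b; b, a - b] := by
    refine basis.ext fun i => ?_
    rw [Matrix.toLin_self]
    apply Subtype.ext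
    fin_cases i
    · simp [Fin.sum_univ_two, basis_zero, basis_one, omega, hab]
    · simp [Fin.sum_univ_two, basis_zero, basis_one, omega, hab]
      linear_combination (b : ℂ) * omega_sq
  rw [Algebra.norm_apply, hmul, LinearMap.det_toLin, Matrix.det_fin_two_of, hab,
    norm_sq_add_mul_omega]
  push_cast
  ring

lemma natCard_quotient_span_singleton {t : EisensteinInts} (ht : t ≠ 0) :
    (Nat.card (EisensteinInts ⧸ Ideal.span {t}) : ℝ) = ‖(t : ℂ)‖ ^ 2 := by
  rw [Ideal.natCard_quotient_span_singleton ht, Nat.cast_natAbs, Int.cast_abs,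
    norm_eq_norm_sq, abs_of_nonneg (sq_nonneg _)]

noncomputable def sqDist {ι : Type*} [Fintype ι] (x y : ι → EisensteinInts) : ℝ :=
  ∑ i, ‖(x i : ℂ) - y i‖ ^ 2

variable {ι : Type*} [Fintype ι]

lemma sqDist_add_mul (c x y : ι → EisensteinInts) (t : EisensteinInts) :
    sqDist (fun i => c i + t * x i) (fun i => c i + t * y i) = ‖(t : ℂ)‖ ^ 2 * sqDist x y := by
  rw [sqDist, sqDist, Finset.mul_sum]
  refine Finset.sum_congr rfl fun i _ => ?_
  rw [← mul_pow, ← norm_mul]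
  push_cast
  ring_nf

lemma hammingDist_le_sqDist (x y : ι → EisensteinInts) :
    (hammingDist x y : ℝ) ≤ sqDist x y := by
  rw [hammingDist, Finset.card_eq_sum_ones, Nat.cast_sum, Nat.cast_one, sqDist]
  calc ∑ i ∈ Finset.univ.filter (fun i => x i ≠ y i), (1 : ℝ)
      ≤ ∑ i ∈ Finset.univ.filter (fun i => x i ≠ y i), ‖(x i : ℂ) - y i‖ ^ 2 :=
        Finset.sum_le_sum fun i hi => by
          simpa using one_le_norm_sq (sub_ne_zero.mpr (Finset.mem_filter.mp hi).2)
    _ ≤ ∑ i, ‖(x i : ℂ) - y i‖ ^ 2 :=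
        Finset.sum_le_sum_of_subset_of_nonneg (Finset.filter_subset _ _)
          fun _ _ _ => sq_nonneg _

end EisensteinInts

theorem stmt_13_general (n : ℕ) (t : EisensteinInts) (ht0 : t ≠ 0)
    (Q : ℕ) (hQ : Nat.card (EisensteinInts ⧸ Ideal.span ({t} : Set EisensteinInts)) = Q)
    (S : Finset EisensteinInts)
    (hSrep : ∀ β ∈ S, ∀ β' ∈ S, β ≠ β' → ¬ t ∣ (β - β'))
    (C : Finset (Fin n → EisensteinInts)) (hCS : ∀ c ∈ C, ∀ i, c i ∈ S)
    (dH : ℕ) (hdH : ∀ c ∈ C, ∀ c' ∈ C, c ≠ c' → dH ≤ hammingDist c c')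
    (Pk : Set (Fin n → EisensteinInts)) (dE2 : ℝ)
    (hdE2 : ∀ p ∈ Pk, ∀ p' ∈ Pk, p ≠ p' →
      dE2 ≤ ∑ i, ‖((p i : ℂ) - (p' i : ℂ))‖ ^ 2)
    (hbound : (Q : ℝ) * dE2 ≤ (dH : ℝ)) :
    ∀ c ∈ C, ∀ p ∈ Pk, ∀ c' ∈ C, ∀ p' ∈ Pk,
      (fun i => c i + t * p i) ≠ (fun i => c' i + t * p' i) →
      (Q : ℝ) * dE2 ≤
        ∑ i, ‖(((c i + t * p i : EisensteinInts) : ℂ)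
          - ((c' i + t * p' i : EisensteinInts) : ℂ))‖ ^ 2 := by
  intro c hc p hp c' hc' p' hp' hne
  change _ ≤ EisensteinInts.sqDist _ _
  by_cases hcc : c = c'
  · subst hcc
    have hpp : p ≠ p' := by rintro rfl; exact hne rfl
    rw [EisensteinInts.sqDist_add_mul, ← hQ, EisensteinInts.natCard_quotient_span_singleton ht0]
    exact mul_le_mul_of_nonneg_left (hdE2 p hp p' hp' hpp) (sq_nonneg _)
  · have hcode : ∀ i, c i ≠ c' i → ¬ t ∣ c i - c' i :=
      fun i => hSrep _ (hCS c hc i) _ (hCS c' hc' i)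
    calc (Q : ℝ) * dE2 ≤ dH := hbound
      _ ≤ hammingDist c c' := by exact_mod_cast hdH c hc c' hc' hcc
      _ ≤ hammingDist (fun i => c i + t * p i) (fun i => c' i + t * p' i) := by
        exact_mod_cast hammingDist_le_hammingDist_add_mul hcode p p'
      _ ≤ _ := EisensteinInts.hammingDist_le_sqDist _ _

/-- let C be a q-ary code of length n containing the zero codeword with
minimum Hamming distance d_H(C), over the alphabet S ⊆ 𝒪_K (S contains 0 and represents
the Q distinct residues modulo the prime ideal 𝔓 = (t) of 𝒪_K = ℤ[ω], where Q = N(𝔓)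
is the cardinality of 𝒪_K/𝔓).  Let Pk ⊆ 𝒪_Kⁿ be a packing with minimum squared Euclidean
distance d_E²(Pk) and suppose d_H(C) ≥ Q·d_E²(Pk).  Then C + t·Pk has minimum squared
Euclidean distance at least Q·d_E²(Pk) (with 𝒪_Kⁿ regarded as a subset of ℝ^{2n}, where
the squared Euclidean distance is Σᵢ |xᵢ - yᵢ|²). -/
theorem stmt_13 (n : ℕ) (t : EisensteinInts) (ht0 : t ≠ 0)
    (hprime : (Ideal.span ({t} : Set EisensteinInts)).IsPrime)
    (Q : ℕ) (hQ : Nat.card (EisensteinInts ⧸ Ideal.span ({t} : Set EisensteinInts)) = Q)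
    (S : Finset EisensteinInts) (hS0 : (0 : EisensteinInts) ∈ S) (hScard : S.card = Q)
    (hSrep : ∀ β ∈ S, ∀ β' ∈ S, β ≠ β' → ¬ t ∣ (β - β'))
    (C : Finset (Fin n → EisensteinInts)) (hCS : ∀ c ∈ C, ∀ i, c i ∈ S)
    (hC0 : (0 : Fin n → EisensteinInts) ∈ C)
    (dH : ℕ) (hdH : ∀ c ∈ C, ∀ c' ∈ C, c ≠ c' → dH ≤ hammingDist c c')
    (Pk : Set (Fin n → EisensteinInts)) (dE2 : ℝ)
    (hdE2 : ∀ p ∈ Pk, ∀ p' ∈ Pk, p ≠ p' →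
      dE2 ≤ ∑ i, ‖((p i : ℂ) - (p' i : ℂ))‖ ^ 2)
    (hbound : (Q : ℝ) * dE2 ≤ (dH : ℝ)) :
    ∀ c ∈ C, ∀ p ∈ Pk, ∀ c' ∈ C, ∀ p' ∈ Pk,
      (fun i => c i + t * p i) ≠ (fun i => c' i + t * p' i) →
      (Q : ℝ) * dE2 ≤
        ∑ i, ‖(((c i + t * p i : EisensteinInts) : ℂ)
          - ((c' i + t * p' i : EisensteinInts) : ℂ))‖ ^ 2 :=
  stmt_13_general n t ht0 Q hQ S hSrep C hCS dH hdH Pk dE2 hdE2 hbound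
end
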